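/- arXiv:2204.01151 — 4 statements merged into one kernel-verified Lean document; each statement's English description precedes it below -/
import Mathlib

section
/- For all integers r, j with 2 ≤ j ≤ r, one has ∑_{i=1}^{j} binom(r, i-1) · binom(r-i, j-i) · (-1)^{j-i} = 1. -/
/-!
Upper negation rewrites `(-1)^d * binom(r - i, d)` with `d = j - i` as the generalized binomial
coefficient `binom(j - 1 - r, d)`. The sum then becomes the Chu–Vandermonde convolution for
`binom(r + (j - 1 - r), j - 1) = binom(j - 1, j - 1) = 1`.
-/

open Finset

theorem Int.choose_neg_natCast_add_one (n k : ℕ) :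
    Ring.choose (-((n : ℤ) + 1)) k = (-1) ^ k * ((n + k).choose k : ℤ) := by
  rw [Ring.choose_neg, show (n : ℤ) + 1 + k - 1 = ((n + k : ℕ) : ℤ) by push_cast; ring,
    Ring.choose_natCast, Units.smul_def, Int.coe_negOnePow_natCast, smul_eq_mul]

theorem Int.sum_antidiagonal_choose_mul_neg_one_pow_mul_choose (r n m : ℕ) :
    ∑ p ∈ antidiagonal m, (r.choose p.1 : ℤ) * ((-1) ^ p.2 * ((n + p.2).choose p.2 : ℤ)) =
      Ring.choose ((r : ℤ) - (n + 1)) m := by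
  rw [sub_eq_add_neg, Ring.add_choose_eq m (Commute.all _ _)]
  simp only [Ring.choose_natCast, Int.choose_neg_natCast_add_one]

theorem sum_binom_alt_eq_one (r j : ℕ) (h2 : 2 ≤ j) (hjr : j ≤ r) :
    ∑ i ∈ Finset.Icc 1 j,
      ((r.choose (i - 1) : ℤ) * ((r - i).choose (j - i) : ℤ) * (-1) ^ (j - i)) = 1 := by
  obtain ⟨m, rfl⟩ : ∃ m, j = m + 1 := ⟨j - 1, by omega⟩
  obtain ⟨n, rfl⟩ : ∃ n, r = n + (m + 1) := ⟨r - (m + 1), by omega⟩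
  have hvdm := Int.sum_antidiagonal_choose_mul_neg_one_pow_mul_choose (n + (m + 1)) n m
  rw [show ((n + (m + 1) : ℕ) : ℤ) - (n + 1) = (m : ℕ) by push_cast; ring, Ring.choose_natCast,
    Nat.choose_self, Nat.cast_one, Nat.sum_antidiagonal_eq_sum_range_succ_mk] at hvdm
  rw [← Ico_add_one_right_eq_Icc, sum_Ico_eq_sum_range, add_tsub_cancel_right]
  refine (sum_congr rfl fun k hk => ?_).trans hvdm
  have hkm : k ≤ m := Nat.lt_succ_iff.mp (mem_range.mp hk)
  rw [show 1 + k - 1 = k by omega, show n + (m + 1) - (1 + k) = n + (m - k) by omega,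
    show m + 1 - (1 + k) = m - k by omega]
  ring
end

section
/- For all integers r, j with 2 ≤ j ≤ r, one has ∑_{i=1}^{j} i · binom(r, i-1) · binom(r-i, j-i) · (-1)^{j-i} = r + 1. -/
/-!
Upper negation turns `(-1)^(k-m) * C(n-1-m, k-m)` into the generalized binomial `C(k-n, k-m)`,
so `∑ₘ (-1)^(k-m) C(n,m) C(n-1-m, k-m) = C(k, k) = 1` for `k < n` by Chu–Vandermonde. Writing
the weight `i = 1 + m`, the constant part of the theorem's sum is this identity for `(r, j-1)`,
and after `m C(r,m) = r C(r-1,m-1)` the `m`-weighted part is `r` times it for `(r-1, j-2)`.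
-/

open Finset

theorem neg_one_pow_mul_choose_eq_ringChoose_neg (a b : ℕ) (ha : 0 < a) :
    (-1 : ℤ) ^ b * ((a + b - 1).choose b : ℤ) = Ring.choose (-(a : ℤ)) b := by
  rw [Ring.choose_neg, show (a : ℤ) + b - 1 = ((a + b - 1 : ℕ) : ℤ) by omega,
    Ring.choose_natCast, Units.smul_def, Int.coe_negOnePow_natCast, smul_eq_mul]

theorem sum_range_neg_one_pow_mul_choose_mul_choose_pred {n k : ℕ} (hk : k < n) :
    ∑ m ∈ range (k + 1), (-1 : ℤ) ^ (k - m) * n.choose m * (n - 1 - m).choose (k - m) = 1 := by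
  have vandermonde := Ring.add_choose_eq (r := (n : ℤ)) (s := -((n - k : ℕ) : ℤ)) k (.all _ _)
  rw [show (n : ℤ) + -((n - k : ℕ) : ℤ) = k by omega, Ring.choose_natCast, Nat.choose_self,
    Nat.cast_one,
    Nat.sum_antidiagonal_eq_sum_range_succ (fun i l => Ring.choose (n : ℤ) i * Ring.choose _ l)]
    at vandermonde
  refine .trans ?_ vandermonde.symm
  refine sum_congr rfl fun m hm => ?_
  have hm : m ≤ k := Nat.lt_succ_iff.mp (mem_range.mp hm)
  rw [Ring.choose_natCast, ← neg_one_pow_mul_choose_eq_ringChoose_neg _ _ (by omega),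
    show n - k + (k - m) - 1 = n - 1 - m by omega]
  ring

theorem sum_range_mul_neg_one_pow_mul_choose_mul_choose_pred {n k : ℕ} (hk₀ : 0 < k)
    (hk : k < n) :
    ∑ m ∈ range (k + 1), (m : ℤ) * ((-1) ^ (k - m) * n.choose m * (n - 1 - m).choose (k - m)) =
      n := by
  obtain ⟨k, rfl⟩ : ∃ k', k = k' + 1 := ⟨k - 1, by omega⟩
  obtain ⟨n, rfl⟩ : ∃ n', n = n' + 1 := ⟨n - 1, by omega⟩
  rw [sum_range_succ', Nat.cast_zero, zero_mul, add_zero]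
  calc ∑ l ∈ range (k + 1), ((l + 1 : ℕ) : ℤ) * ((-1) ^ (k + 1 - (l + 1)) * (n + 1).choose (l + 1)
          * (n + 1 - 1 - (l + 1)).choose (k + 1 - (l + 1)))
      = ∑ l ∈ range (k + 1), (n + 1 : ℤ) * ((-1) ^ (k - l) * n.choose l
          * (n - 1 - l).choose (k - l)) := by
        refine sum_congr rfl fun l _ => ?_
        have absorb : ((n + 1) * n.choose l : ℤ) = (n + 1).choose (l + 1) * (l + 1) := by
          exact_mod_cast Nat.add_one_mul_choose_eq n l
        rw [show k + 1 - (l + 1) = k - l by omega, show n + 1 - 1 - (l + 1) = n - 1 - l by omega]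
        push_cast
        linear_combination -(-1) ^ (k - l) * ((n - 1 - l).choose (k - l) : ℤ) * absorb
    _ = (n + 1 : ℕ) := by
        rw [← mul_sum, sum_range_neg_one_pow_mul_choose_mul_choose_pred (by omega)]
        push_cast; ring

theorem sum_binom_alt_eq_r_add_one (r j : ℕ) (h2 : 2 ≤ j) (hjr : j ≤ r) :
    ∑ i ∈ Finset.Icc 1 j,
      ((i : ℤ) * (r.choose (i - 1) : ℤ) * ((r - i).choose (j - i) : ℤ) * (-1) ^ (j - i))
      = (r : ℤ) + 1 := by
  obtain ⟨k, rfl⟩ : ∃ k, j = k + 1 := ⟨j - 1, by omega⟩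
  rw [← Ico_add_one_right_eq_Icc, sum_Ico_eq_sum_range, Nat.add_sub_cancel]
  have split : ∀ m ∈ range (k + 1),
      ((1 + m : ℕ) : ℤ) * r.choose (1 + m - 1) * (r - (1 + m)).choose (k + 1 - (1 + m))
          * (-1) ^ (k + 1 - (1 + m))
        = (-1) ^ (k - m) * r.choose m * (r - 1 - m).choose (k - m)
          + m * ((-1) ^ (k - m) * r.choose m * (r - 1 - m).choose (k - m)) := by
    intro m _
    rw [show 1 + m - 1 = m by omega, show r - (1 + m) = r - 1 - m by omega,
      show k + 1 - (1 + m) = k - m by omega]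
    push_cast
    ring
  rw [sum_congr rfl split, sum_add_distrib,
    sum_range_neg_one_pow_mul_choose_mul_choose_pred (by omega),
    sum_range_mul_neg_one_pow_mul_choose_mul_choose_pred (by omega) (by omega)]
  ring
end

section
/- In the polynomial ring ℚ[x,q], for any integer r ≥ 1 and constants χ, c, M, m ∈ ℚ with m ≠ 0, the following identity holds: (χ/m)·x^{r} + ∑_{j=1}^{r} (1/m)·(j − χ)·binom(r, j-1)·c^{j-1}·(M − c·(r+1)/j)·q^{j}·x^{r-j} = (χ/m)·(x + c·q)^{r} + [ (1/m)·(r+1−χ)·(M − c) − (M/m)·r ]·q·(x + c·q)^{r-1} + ∑_{j=2}^{r} (1/m)·c^{j-1}·(r+1−χ)·(M − c)·q^{j}·(x + c·q)^{r-j}. -/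
/-!
Write `y = x + c q` and `A = (r + 1 - χ)(M - c)/m`. On the right-hand side the coefficient of
`q y^(r-1)` is `A - M r / m` and that of `q^j y^(r-j)` for `j ≥ 2` is `A c^(j-1)`, so apart from
`-(M r / m) q y^(r-1)` these terms add up to `A q ∑_{i<r} (cq)^i y^(r-1-i)`. Multiplied by
`x = y - cq` this geometric sum becomes `y^r - (cq)^r`, hence in the basis `q^j x^(r-j)` it has
coefficients `binom(r, j-1) c^(j-1)`. Expanding `y^r` and `y^(r-1)` binomially as well, the identity
reduces to one identity between binomial coefficients for each `j`, which follows from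
`k binom(n, k) = n binom(n-1, k-1)` and Pascal's rule. Indices are shifted to avoid
truncated subtraction: `r = s + 1` and `j = i + 1`.
-/

open MvPolynomial Finset

theorem sum_pow_mul_add_pow_eq_sum_choose {R : Type*} [CommRing R] [IsDomain R] {a : R}
    (ha : a ≠ 0) (b : R) (n : ℕ) :
    ∑ i ∈ range n, b ^ i * (a + b) ^ (n - 1 - i)
      = ∑ i ∈ range n, (n.choose i : R) * b ^ i * a ^ (n - 1 - i) := by
  refine mul_right_cancel₀ ha (add_right_cancel (b := b ^ n) ?_)
  rw [geom_sum₂_comm, geom_sum₂_mul_add, add_comm a b, add_pow, sum_range_succ,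
    Nat.choose_self, Nat.sub_self, sum_mul]
  simp only [pow_zero, Nat.cast_one, mul_one, add_left_inj]
  refine sum_congr rfl fun i hi => ?_
  rw [show n - i = n - 1 - i + 1 by have := mem_range.1 hi; omega, pow_succ]
  ring

theorem sum_Icc_one_eq_sum_range {M : Type*} [AddCommMonoid M] (f : ℕ → M) (s : ℕ) :
    ∑ j ∈ Icc 1 (s + 1), f j = ∑ i ∈ range (s + 1), f (i + 1) := by
  rw [range_eq_Ico, sum_Ico_add' f 0 (s + 1) 1, zero_add, Ico_add_one_right_eq_Icc]

theorem euler_coeff_eq (s i : ℕ) (χ c M : ℚ) :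
    ((i + 1 : ℚ) - χ) * (s + 1).choose i * (M - c * ((s + 1 : ℚ) + 1) / (i + 1))
      = χ * c * (s + 1).choose (i + 1) - M * (s + 1) * s.choose i
        + ((s + 1 : ℚ) + 1 - χ) * (M - c) * (s + 1).choose i := by
  have h₁ : ((s + 1 : ℕ) : ℚ) * s.choose i = (s + 1).choose (i + 1) * (i + 1 : ℕ) := by
    exact_mod_cast Nat.add_one_mul_choose_eq s i
  have h₂ : ((s + 1 + 1 : ℕ) : ℚ) * (s + 1).choose i
      = ((s + 1).choose i + (s + 1).choose (i + 1)) * (i + 1 : ℕ) := by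
    rw [← Nat.cast_add, ← Nat.choose_succ_succ]
    exact_mod_cast Nat.add_one_mul_choose_eq (s + 1) i
  push_cast at h₁ h₂
  have h₃ : ((s : ℚ) + 1 + 1) / (i + 1) * (s + 1).choose i
      = (s + 1).choose i + (s + 1).choose (i + 1) := by
    rw [div_mul_eq_mul_div, div_eq_iff (by positivity), h₂]
  calc ((i + 1 : ℚ) - χ) * (s + 1).choose i * (M - c * ((s + 1 : ℚ) + 1) / (i + 1))
      = ((i + 1 : ℚ) - χ) * (M * (s + 1).choose i
          - c * (((s : ℚ) + 1 + 1) / (i + 1) * (s + 1).choose i)) := by ring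
    _ = _ := by rw [h₃]; linear_combination M * h₁ - (M - c) * h₂

section BinaryForm

variable {R : Type*} [CommRing R]

noncomputable def binaryForm (s : ℕ) (f : ℕ → R) : MvPolynomial (Fin 2) R :=
  ∑ i ∈ range (s + 1), C (f i) * X 1 ^ i * X 0 ^ (s - i)

theorem add_C_mul_X_pow (c : R) (s : ℕ) :
    (X 0 + C c * X 1) ^ s = binaryForm s (fun i => s.choose i * c ^ i) := by
  rw [add_comm, add_pow, binaryForm]
  refine sum_congr rfl fun i _ => ?_
  rw [map_mul, map_pow, map_natCast]
  ring

theorem add_C_mul_X_pow_succ (c : R) (s : ℕ) :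
    (X 0 + C c * X 1) ^ (s + 1)
      = X 0 ^ (s + 1) + X 1 * binaryForm s (fun i => (s + 1).choose (i + 1) * c ^ (i + 1)) := by
  rw [add_C_mul_X_pow, binaryForm, sum_range_succ', binaryForm, mul_sum, add_comm]
  simp only [Nat.choose_zero_right, Nat.cast_one, pow_zero, mul_one, map_one, one_mul,
    Nat.sub_zero, Nat.add_sub_add_right]
  congr 1
  exact sum_congr rfl fun i _ => by ring

theorem sum_Icc_one_eq_X_mul_binaryForm (s : ℕ) (f : ℕ → R) :
    ∑ j ∈ Icc 1 (s + 1), C (f j) * X 1 ^ j * X 0 ^ (s + 1 - j)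
      = X 1 * binaryForm s (fun i => f (i + 1)) := by
  rw [sum_Icc_one_eq_sum_range, binaryForm, mul_sum]
  refine sum_congr rfl fun i _ => ?_
  rw [Nat.add_sub_add_right]
  ring

theorem sum_C_mul_X_pow_mul_add_pow [IsDomain R] (c : R) (s : ℕ) :
    ∑ i ∈ range (s + 1), (C c * X 1) ^ i * (X 0 + C c * X 1) ^ (s - i)
      = binaryForm s (fun i => (s + 1).choose i * c ^ i) := by
  have h := sum_pow_mul_add_pow_eq_sum_choose (X_ne_zero (0 : Fin 2) (R := R)) (C c * X 1) (s + 1)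
  simp only [Nat.add_sub_cancel] at h
  rw [h, binaryForm]
  refine sum_congr rfl fun i _ => ?_
  rw [map_mul, map_pow, map_natCast]
  ring

theorem sum_Icc_C_mul_pow_mul_add_pow [IsDomain R] (a c : R) (s : ℕ) :
    ∑ j ∈ Icc 1 (s + 1), C (a * c ^ (j - 1)) * X 1 ^ j * (X 0 + C c * X 1) ^ (s + 1 - j)
      = X 1 * (C a * binaryForm s (fun i => (s + 1).choose i * c ^ i)) := by
  rw [sum_Icc_one_eq_sum_range, ← sum_C_mul_X_pow_mul_add_pow, mul_sum, mul_sum]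
  refine sum_congr rfl fun i _ => ?_
  rw [Nat.add_sub_cancel, Nat.add_sub_add_right, map_mul, map_pow]
  ring

end BinaryForm

theorem binaryForm_euler_coeff_eq (s : ℕ) (χ c M m : ℚ) :
    binaryForm s (fun i => 1 / m * (((i + 1 : ℕ) : ℚ) - χ) * (s + 1).choose (i + 1 - 1)
        * c ^ (i + 1 - 1) * (M - c * ((s + 1 : ℕ) + 1) / (i + 1 : ℕ)))
      = C (χ / m) * binaryForm s (fun i => (s + 1).choose (i + 1) * c ^ (i + 1))
        + C (1 / m * ((s + 1 : ℕ) + 1 - χ) * (M - c))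
          * binaryForm s (fun i => (s + 1).choose i * c ^ i)
        - C (M / m * (s + 1 : ℕ)) * binaryForm s (fun i => s.choose i * c ^ i) := by
  simp only [binaryForm, mul_sum, ← sum_add_distrib, ← sum_sub_distrib]
  refine sum_congr rfl fun i _ => ?_
  have key : 1 / m * (((i + 1 : ℕ) : ℚ) - χ) * (s + 1).choose i * c ^ i
        * (M - c * ((s + 1 : ℕ) + 1) / (i + 1 : ℕ))
      = χ / m * ((s + 1).choose (i + 1) * c ^ (i + 1))
        + 1 / m * ((s + 1 : ℕ) + 1 - χ) * (M - c) * ((s + 1).choose i * c ^ i)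
        - M / m * (s + 1 : ℕ) * (s.choose i * c ^ i) := by
    push_cast
    linear_combination c ^ i / m * euler_coeff_eq s i χ c M
  rw [Nat.add_sub_cancel, key]
  simp only [map_sub, map_add, map_mul]
  ring

theorem euler_class_change_of_basis_general (r : ℕ) (hr : 1 ≤ r) (χ c M m : ℚ) :
    let x : MvPolynomial (Fin 2) ℚ := X 0
    let q : MvPolynomial (Fin 2) ℚ := X 1
    C (χ / m) * x ^ r
      + ∑ j ∈ Finset.Icc 1 r,
          C ((1 / m) * ((j : ℚ) - χ) * (r.choose (j - 1) : ℚ) * c ^ (j - 1)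
              * (M - c * ((r : ℚ) + 1) / (j : ℚ)))
            * q ^ j * x ^ (r - j)
      = C (χ / m) * (x + C c * q) ^ r
        + C ((1 / m) * ((r : ℚ) + 1 - χ) * (M - c) - (M / m) * r)
            * q * (x + C c * q) ^ (r - 1)
        + ∑ j ∈ Finset.Icc 2 r,
            C ((1 / m) * c ^ (j - 1) * ((r : ℚ) + 1 - χ) * (M - c))
              * q ^ j * (x + C c * q) ^ (r - j) := by
  dsimp only
  obtain ⟨s, rfl⟩ : ∃ s, r = s + 1 := ⟨r - 1, by omega⟩
  have hgeom : C (1 / m * ((s + 1 : ℕ) + 1 - χ) * (M - c)) * X 1 * (X 0 + C c * X 1) ^ s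
      + ∑ j ∈ Icc 2 (s + 1), C (1 / m * c ^ (j - 1) * ((s + 1 : ℕ) + 1 - χ) * (M - c))
          * X 1 ^ j * (X 0 + C c * X 1) ^ (s + 1 - j)
      = X 1 * (C (1 / m * ((s + 1 : ℕ) + 1 - χ) * (M - c))
          * binaryForm s (fun i => (s + 1).choose i * c ^ i)) := by
    rw [← sum_Icc_C_mul_pow_mul_add_pow, ← add_sum_Ioc_eq_sum_Icc (by omega : 1 ≤ s + 1),
      ← Icc_add_one_left_eq_Ioc]
    simp only [Nat.sub_self, pow_zero, mul_one, pow_one, Nat.add_sub_cancel]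
    exact congrArg _ (sum_congr rfl fun j _ => by congr 3; ring)
  rw [sum_Icc_one_eq_X_mul_binaryForm, add_C_mul_X_pow_succ, Nat.add_sub_cancel, map_sub]
  linear_combination X 1 * binaryForm_euler_coeff_eq s χ c M m - hgeom
    + C (M / m * (s + 1 : ℕ)) * X 1 * add_C_mul_X_pow c s

theorem euler_class_change_of_basis (r : ℕ) (hr : 1 ≤ r) (χ c M m : ℚ) (hm : m ≠ 0) :
    let x : MvPolynomial (Fin 2) ℚ := X 0
    let q : MvPolynomial (Fin 2) ℚ := X 1
    C (χ / m) * x ^ r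
      + ∑ j ∈ Finset.Icc 1 r,
          C ((1 / m) * ((j : ℚ) - χ) * (r.choose (j - 1) : ℚ) * c ^ (j - 1)
              * (M - c * ((r : ℚ) + 1) / (j : ℚ)))
            * q ^ j * x ^ (r - j)
      = C (χ / m) * (x + C c * q) ^ r
        + C ((1 / m) * ((r : ℚ) + 1 - χ) * (M - c) - (M / m) * r)
            * q * (x + C c * q) ^ (r - 1)
        + ∑ j ∈ Finset.Icc 2 r,
            C ((1 / m) * c ^ (j - 1) * ((r : ℚ) + 1 - χ) * (M - c))
              * q ^ j * (x + C c * q) ^ (r - j) :=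
  euler_class_change_of_basis_general r hr χ c M m
end

section
/- Let r ≥ 1, d ≥ 1, and let A(k, s) for integers k ≥ 1 and s ∈ ℤ be commuting indeterminates (elements of a commutative polynomial ring over ℚ). For integers i with 0 ≤ i ≤ r and j ≥ 1 with jd ≤ i, define C(i, j) := ∑_{ℓ=1}^{j} (−1)^{ℓ} ∑_{(i_1,…,i_ℓ) ∈ ℤ_{≥1}^ℓ, i_1+⋯+i_ℓ = j} ∑_{0 ≤ u_ℓ ≤ ⋯ ≤ u_1 ≤ i − jd} ∏_{a=1}^{ℓ} i_a · A(i_a, r − (j − i_1 − ⋯ − i_a)d − u_a), and set C(i, 0) := 1 and C(i, j) := 0 for jd > i. Then for all 1 ≤ i ≤ r and 1 ≤ j with jd ≤ i, C satisfies the recursion C(i, j) = C(i−1, j) − ∑_{k=1}^{j} k · A(k, r − (i − kd)) · C(i − kd, j − k). -/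
open Finset

/-- The normalized two-point invariants as commuting indeterminates:
`A k s` is the variable `α^k_s` in the polynomial ring `ℚ[A(k,s) : k ∈ ℕ, s ∈ ℤ]`. -/
noncomputable def Avar (k : ℕ) (s : ℤ) : MvPolynomial (ℕ × ℤ) ℚ :=
  MvPolynomial.X (k, s)

/-- The nested-sum expression `C(i,j)` for `Coeff(H^i, q^j H^{⋆(i-jd)})`:
`C(i,0) = 1`, `C(i,j) = 0` for `jd > i`, and otherwise
`C(i,j) = ∑_{ℓ=1}^{j} (-1)^ℓ ∑_{i_1+⋯+i_ℓ=j, i_a ≥ 1} ∑_{0 ≤ u_ℓ ≤ ⋯ ≤ u_1 ≤ i-jd}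
  ∏_{a=1}^{ℓ} i_a · A(i_a, r-(j-i_1-⋯-i_a)d-u_a)`,
where the tuple `y : Fin ℓ → ℕ` encodes `(i_1,…,i_ℓ)` (with `y 0 = i_1`) and
`u : Fin ℓ → ℕ` encodes `(u_1,…,u_ℓ)` (with `u 0 = u_1`, so the chain condition
`u_ℓ ≤ ⋯ ≤ u_1` reads: `a ≤ b → u b ≤ u a`). -/
noncomputable def Ccoeff (r d i j : ℕ) : MvPolynomial (ℕ × ℤ) ℚ :=
  if j = 0 then 1
  else if i < j * d then 0
  else
    ∑ ℓ ∈ Icc 1 j, (-1 : MvPolynomial (ℕ × ℤ) ℚ) ^ ℓ *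
      ∑ y ∈ (Fintype.piFinset fun _ : Fin ℓ => Icc 1 j).filter
          (fun y => ∑ a, y a = j),
        ∑ u ∈ (Fintype.piFinset fun _ : Fin ℓ => Finset.range (i - j * d + 1)).filter
            (fun u => ∀ a b : Fin ℓ, a ≤ b → u b ≤ u a),
          ∏ a : Fin ℓ,
            (y a : MvPolynomial (ℕ × ℤ) ℚ) *
              Avar (y a)
                ((r : ℤ) - ((j : ℤ) - ∑ b ∈ Iic a, (y b : ℤ)) * (d : ℤ) - (u a : ℤ))

/-!
Write `M = i - jd` and group the terms of `C(i, j)` by the first part `i₁ = k` of the composition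
and the first chain element `u₁ = m ≤ M`. What remains is a term of `C(m + (j - k)d, j - k)`,
multiplied by `k A(k, r - (j - k)d - m)`, so
`C(i, j) = -∑_{m ≤ M} ∑_{k=1}^{j} k A(k, r - (j - k)d - m) C(m + (j - k)d, j - k)`.
The same identity for `C(i - 1, j)` runs over `m < M` (an empty sum when `M = 0`, where
`C(i - 1, j) = 0`), and the difference is the term `m = M`, which is the recursion.
-/

theorem Fin.sum_Iic_succ {β : Type*} [AddCommMonoid β] {n : ℕ} (f : Fin (n + 1) → β)
    (a : Fin n) : ∑ b ∈ Iic a.succ, f b = f 0 + ∑ b ∈ Iic a, f b.succ := by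
  have : Iic a.succ = insert 0 (Ioc 0 a.succ) := by
    ext b; simp [Fin.le_iff_val_le_val]
  rw [this, sum_insert (by simp), ← Fin.map_succEmb_Iic, sum_map]
  rfl

theorem Fin.antitone_cons_iff {α : Type*} [Preorder α] {n : ℕ} {f : Fin n → α} {a : α} :
    Antitone (Fin.cons a f : Fin (n + 1) → α) ↔ (∀ i, f i ≤ a) ∧ Antitone f := by
  rw [antitone_iff_forall_lt, antitone_iff_forall_lt]
  exact Fin.liftFun_cons (· ≥ ·)

theorem Finset.sum_eq_sum_sum_cons {α β : Type*} [AddCommMonoid β] {n : ℕ}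
    {S : Finset (Fin (n + 1) → α)} {T : Finset α} {U : α → Finset (Fin n → α)}
    (hS : ∀ x t, Fin.cons x t ∈ S ↔ x ∈ T ∧ t ∈ U x) (f : (Fin (n + 1) → α) → β) :
    ∑ y ∈ S, f y = ∑ x ∈ T, ∑ t ∈ U x, f (Fin.cons x t) := by
  rw [sum_sigma']
  refine sum_nbij' (fun y => ⟨y 0, Fin.tail y⟩) (fun p => Fin.cons p.1 p.2) ?_ ?_ ?_ ?_ ?_
  · intro y hy
    rw [← Fin.cons_self_tail y, hS] at hy
    simpa using hy
  · rintro ⟨x, t⟩ h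
    simpa [hS] using h
  · intro y _
    exact Fin.cons_self_tail y
  · rintro ⟨x, t⟩ _
    simp
  · intro y _
    simp

namespace Ccoeff

def compositions (s ℓ : ℕ) : Finset (Fin ℓ → ℕ) :=
  {y ∈ Fintype.piFinset fun _ => Icc 1 s | ∑ a, y a = s}

def antitoneTuples (M ℓ : ℕ) : Finset (Fin ℓ → ℕ) :=
  {u ∈ Fintype.piFinset fun _ => range (M + 1) | ∀ a b : Fin ℓ, a ≤ b → u b ≤ u a}

theorem mem_compositions {s ℓ : ℕ} {y : Fin ℓ → ℕ} :
    y ∈ compositions s ℓ ↔ (∀ a, 1 ≤ y a) ∧ ∑ a, y a = s := by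
  simp only [compositions, mem_filter, Fintype.mem_piFinset, mem_Icc]
  refine ⟨fun h => ⟨fun a => (h.1 a).1, h.2⟩, fun h => ⟨fun a => ⟨h.1 a, ?_⟩, h.2⟩⟩
  rw [← h.2]
  exact single_le_sum (fun b _ => Nat.zero_le (y b)) (mem_univ a)

theorem mem_antitoneTuples {M ℓ : ℕ} {u : Fin ℓ → ℕ} :
    u ∈ antitoneTuples M ℓ ↔ (∀ a, u a ≤ M) ∧ Antitone u := by
  simp only [antitoneTuples, mem_filter, Fintype.mem_piFinset, mem_range, Nat.lt_succ_iff]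
  rfl

theorem cons_mem_compositions {s ℓ k : ℕ} {y : Fin ℓ → ℕ} :
    Fin.cons k y ∈ compositions s (ℓ + 1) ↔ k ∈ Icc 1 s ∧ y ∈ compositions (s - k) ℓ := by
  simp only [mem_compositions, Fin.forall_fin_succ, Fin.cons_zero, Fin.cons_succ,
    Fin.sum_cons, mem_Icc]
  constructor
  · rintro ⟨⟨hk, hy⟩, hsum⟩
    exact ⟨⟨hk, by omega⟩, hy, by omega⟩
  · rintro ⟨⟨hk, hks⟩, hy, hsum⟩
    exact ⟨⟨hk, hy⟩, by omega⟩

theorem cons_mem_antitoneTuples {M ℓ m : ℕ} {u : Fin ℓ → ℕ} :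
    Fin.cons m u ∈ antitoneTuples M (ℓ + 1) ↔ m ∈ range (M + 1) ∧ u ∈ antitoneTuples m ℓ := by
  simp only [mem_antitoneTuples, Fin.forall_fin_succ, Fin.cons_zero, Fin.cons_succ,
    Fin.antitone_cons_iff, mem_range, Nat.lt_succ_iff]
  exact ⟨fun h => ⟨h.1.1, h.2⟩, fun h => ⟨⟨h.1, fun a => (h.2.1 a).trans h.1⟩, h.2⟩⟩

theorem compositions_eq_empty_of_lt {s ℓ : ℕ} (h : s < ℓ) : compositions s ℓ = ∅ := by
  refine eq_empty_of_forall_notMem fun y hy => ?_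
  rw [mem_compositions] at hy
  have := card_nsmul_le_sum univ y 1 fun a _ => hy.1 a
  simp [hy.2] at this
  omega

variable {R : Type*} [CommRing R] (A : ℕ → ℤ → R) (r d : ℕ)

def summand (j : ℤ) {ℓ : ℕ} (y u : Fin ℓ → ℕ) : R :=
  ∏ a, (y a : R) * A (y a) (r - (j - ∑ b ∈ Iic a, (y b : ℤ)) * d - u a)

theorem summand_cons (j : ℤ) {ℓ : ℕ} (k m : ℕ) (y u : Fin ℓ → ℕ) :
    summand A r d j (Fin.cons k y) (Fin.cons m u)
      = k * A k (r - (j - k) * d - m) * summand A r d (j - k) y u := by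
  have hIic : Iic (0 : Fin (ℓ + 1)) = {0} := by ext; simp
  simp only [summand, Fin.prod_univ_succ, Fin.cons_zero, Fin.cons_succ, hIic, sum_singleton,
    Fin.sum_Iic_succ, sub_add_eq_sub_sub]

def lengthTerm (s M ℓ : ℕ) : R :=
  ∑ y ∈ compositions s ℓ, ∑ u ∈ antitoneTuples M ℓ, summand A r d s y u

/-- Starting `ℓ` at `0` makes this `1` for `s = 0` and changes nothing for `s ≠ 0`. -/
def nestedSum (s M : ℕ) : R :=
  ∑ ℓ ∈ range (s + 1), (-1) ^ ℓ * lengthTerm A r d s M ℓ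

theorem lengthTerm_zero (s M : ℕ) : lengthTerm A r d s M 0 = if s = 0 then 1 else 0 := by
  rcases eq_or_ne s 0 with rfl | hs
  · simp [lengthTerm, compositions, antitoneTuples, summand]
  · simp [lengthTerm, compositions, antitoneTuples, hs, hs.symm]

theorem lengthTerm_eq_zero_of_lt {s M ℓ : ℕ} (h : s < ℓ) : lengthTerm A r d s M ℓ = 0 := by
  rw [lengthTerm, compositions_eq_empty_of_lt h, sum_empty]

theorem lengthTerm_succ (s M ℓ : ℕ) :
    lengthTerm A r d s M (ℓ + 1) = ∑ k ∈ Icc 1 s, ∑ m ∈ range (M + 1),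
      k * A k (r - ((s : ℤ) - k) * d - m) * lengthTerm A r d (s - k) m ℓ := by
  rw [lengthTerm, sum_eq_sum_sum_cons (fun _ _ => cons_mem_compositions)]
  refine sum_congr rfl fun k hk => ?_
  have hks : ((s - k : ℕ) : ℤ) = s - k := Nat.cast_sub (mem_Icc.1 hk).2
  simp_rw [sum_eq_sum_sum_cons (fun _ _ => cons_mem_antitoneTuples), summand_cons, lengthTerm,
    mul_sum, hks]
  exact sum_comm

theorem nestedSum_zero_left (M : ℕ) : nestedSum A r d 0 M = 1 := by
  simp [nestedSum, lengthTerm_zero]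

theorem nestedSum_eq_sum_range {s N : ℕ} (M : ℕ) (h : s < N) :
    nestedSum A r d s M = ∑ ℓ ∈ range N, (-1) ^ ℓ * lengthTerm A r d s M ℓ := by
  refine sum_subset (range_subset_range.2 h) fun ℓ _ hℓ => ?_
  rw [lengthTerm_eq_zero_of_lt A r d (by simpa using hℓ), mul_zero]

theorem nestedSum_eq_neg_sum {s : ℕ} (hs : s ≠ 0) (M : ℕ) :
    nestedSum A r d s M = -∑ m ∈ range (M + 1), ∑ k ∈ Icc 1 s,
      k * A k (r - ((s : ℤ) - k) * d - m) * nestedSum A r d (s - k) m := by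
  calc nestedSum A r d s M
      = ∑ ℓ ∈ range s, (-1) ^ (ℓ + 1) * lengthTerm A r d s M (ℓ + 1) := by
        rw [nestedSum, sum_range_succ', lengthTerm_zero, if_neg hs, mul_zero, add_zero]
    _ = ∑ ℓ ∈ range s, ∑ m ∈ range (M + 1), ∑ k ∈ Icc 1 s,
          -(k * A k (r - ((s : ℤ) - k) * d - m) * ((-1) ^ ℓ * lengthTerm A r d (s - k) m ℓ)) := by
        refine sum_congr rfl fun ℓ _ => ?_
        rw [lengthTerm_succ, sum_comm, mul_sum]
        refine sum_congr rfl fun m _ => ?_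
        rw [mul_sum]
        refine sum_congr rfl fun k _ => ?_
        ring
    _ = _ := by
        rw [sum_comm, ← sum_neg_distrib]
        refine sum_congr rfl fun m _ => ?_
        rw [sum_comm, ← sum_neg_distrib]
        refine sum_congr rfl fun k hk => ?_
        rw [nestedSum_eq_sum_range A r d m (show s - k < s by grind), mul_sum, ← sum_neg_distrib]

end Ccoeff

open Ccoeff

theorem Ccoeff_add_mul_eq_nestedSum (r d M s : ℕ) :
    Ccoeff r d (M + s * d) s = nestedSum Avar r d s M := by
  rcases eq_or_ne s 0 with rfl | hs
  · rw [Ccoeff, if_pos rfl, nestedSum_zero_left]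
  · rw [Ccoeff, if_neg hs, if_neg (by omega), Nat.add_sub_cancel, nestedSum,
      sum_range_eq_add_Ico _ (show 0 < s + 1 by omega), lengthTerm_zero, if_neg hs, mul_zero,
      zero_add, Ico_add_one_right_eq_Icc]
    rfl

theorem Ccoeff_eq_neg_sum (r d i : ℕ) {j : ℕ} (hj : j ≠ 0) :
    Ccoeff r d i j = -∑ m ∈ range (i + 1 - j * d), ∑ k ∈ Icc 1 j,
      k * Avar k (r - ((j : ℤ) - k) * d - m) * Ccoeff r d (m + (j - k) * d) (j - k) := by
  rcases lt_or_ge i (j * d) with h | h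
  · rw [Ccoeff, if_neg hj, if_pos h, Nat.sub_eq_zero_of_le h, range_zero, sum_empty, neg_zero]
  · obtain ⟨M, rfl⟩ := Nat.exists_eq_add_of_le' h
    simp_rw [Ccoeff_add_mul_eq_nestedSum, nestedSum_eq_neg_sum Avar r d hj,
      show M + j * d + 1 - j * d = M + 1 by omega]

theorem Ccoeff_recursion_general (r d : ℕ) :
    ∀ i j : ℕ, 1 ≤ i → i ≤ r → 1 ≤ j → j * d ≤ i →
      Ccoeff r d i j
        = Ccoeff r d (i - 1) j
          - ∑ k ∈ Icc 1 j,
              (k : MvPolynomial (ℕ × ℤ) ℚ) *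
                Avar k ((r : ℤ) - ((i : ℤ) - (k : ℤ) * (d : ℤ))) *
                Ccoeff r d (i - k * d) (j - k) := by
  intro i j hi _ hj hjd
  have hj0 : j ≠ 0 := by omega
  obtain ⟨M, rfl⟩ := Nat.exists_eq_add_of_le' hjd
  rw [Ccoeff_eq_neg_sum r d _ hj0, Ccoeff_eq_neg_sum r d _ hj0,
    show M + j * d + 1 - j * d = M + 1 by omega, show M + j * d - 1 + 1 - j * d = M by omega,
    sum_range_succ, neg_add', sub_right_inj]
  refine sum_congr rfl fun k hk => ?_
  have hkj : k ≤ j := (mem_Icc.1 hk).2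
  have hkd : k * d ≤ j * d := Nat.mul_le_mul_right d hkj
  have hindex : M + (j - k) * d = M + j * d - k * d := by rw [Nat.sub_mul]; omega
  have hdegree : (r : ℤ) - ((j : ℤ) - k) * d - M = r - (((M + j * d : ℕ) : ℤ) - k * d) := by
    push_cast
    ring
  rw [hindex, hdegree]

theorem Ccoeff_recursion (r d : ℕ) (hr : 1 ≤ r) (hd : 1 ≤ d) :
    ∀ i j : ℕ, 1 ≤ i → i ≤ r → 1 ≤ j → j * d ≤ i →
      Ccoeff r d i j
        = Ccoeff r d (i - 1) j
          - ∑ k ∈ Icc 1 j,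
              (k : MvPolynomial (ℕ × ℤ) ℚ) *
                Avar k ((r : ℤ) - ((i : ℤ) - (k : ℤ) * (d : ℤ))) *
                Ccoeff r d (i - k * d) (j - k) :=
  Ccoeff_recursion_general r d
end
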